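/- For every positive integer n, 16·T(1,3,3;n) = N(1,3,3;4(8n+7)) − N(1,3,3;8n+7). -/
import Mathlib

/-- Number of representations of `n` as `a*x^2 + b*y^2 + c*z^2` with `x,y,z : ℤ`. -/
noncomputable def N (a b c n : ℕ) : ℕ :=
  Nat.card {p : ℤ × ℤ × ℤ //
    (a : ℤ) * p.1 ^ 2 + (b : ℤ) * p.2.1 ^ 2 + (c : ℤ) * p.2.2 ^ 2 = (n : ℤ)}

/-- Number of representations of `n` as `a*x(x+1)/2 + b*y(y+1)/2 + c*z(z+1)/2` with `x,y,z : ℕ`. -/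
noncomputable def T (a b c n : ℕ) : ℕ :=
  Nat.card {p : ℕ × ℕ × ℕ //
    a * (p.1 * (p.1 + 1) / 2) + b * (p.2.1 * (p.2.1 + 1) / 2)
      + c * (p.2.2 * (p.2.2 + 1) / 2) = n}


private lemma sq_mod16 (x : ℤ) : x^2 % 16 = (x % 8)^2 % 16 := by
  conv_lhs => rw [show x = 8*(x/8) + x % 8 by omega]
  rw [show (8*(x/8) + x % 8)^2 = (x % 8)^2 + 16*(4*(x/8)^2 + (x/8)*(x % 8)) by ring,
    Int.add_mul_emod_self_left]

private lemma sq_mod8 (x : ℤ) : x^2 % 8 = (x % 4)^2 % 8 := by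
  conv_lhs => rw [show x = 4*(x/4) + x % 4 by omega]
  rw [show (4*(x/4) + x % 4)^2 = (x % 4)^2 + 8*(2*(x/4)^2 + (x/4)*(x % 4)) by ring,
    Int.add_mul_emod_self_left]

private lemma sq_mod4 (x : ℤ) : x^2 % 4 = (x % 2)^2 % 4 := by
  conv_lhs => rw [show x = 2*(x/2) + x % 2 by omega]
  rw [show (2*(x/2) + x % 2)^2 = (x % 2)^2 + 4*((x/2)^2 + (x/2)*(x % 2)) by ring,
    Int.add_mul_emod_self_left]

private lemma odd_sq16 (x : ℤ) (h : x % 2 = 1) :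
    ((x % 8 = 1 ∨ x % 8 = 7) ∧ x^2 % 16 = 1) ∨ ((x % 8 = 3 ∨ x % 8 = 5) ∧ x^2 % 16 = 9) := by
  have h16 := sq_mod16 x
  have h8 : x % 8 = 1 ∨ x % 8 = 3 ∨ x % 8 = 5 ∨ x % 8 = 7 := by omega
  rcases h8 with h8|h8|h8|h8 <;> rw [h8] at h16 <;> norm_num at h16
  · exact Or.inl ⟨Or.inl h8, h16⟩
  · exact Or.inr ⟨Or.inl h8, h16⟩
  · exact Or.inr ⟨Or.inr h8, h16⟩
  · exact Or.inl ⟨Or.inr h8, h16⟩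

private lemma even_sq16 (x : ℤ) (h : x % 2 = 0) :
    (x % 4 = 0 ∧ x^2 % 16 = 0) ∨ (x % 4 = 2 ∧ x^2 % 16 = 4) := by
  have h16 := sq_mod16 x
  have h8 : x % 8 = 0 ∨ x % 8 = 2 ∨ x % 8 = 4 ∨ x % 8 = 6 := by omega
  rcases h8 with h8|h8|h8|h8 <;> rw [h8] at h16 <;> norm_num at h16
  · exact Or.inl ⟨by omega, Int.emod_eq_zero_of_dvd h16⟩
  · exact Or.inr ⟨by omega, h16⟩
  · exact Or.inl ⟨by omega, Int.emod_eq_zero_of_dvd h16⟩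
  · exact Or.inr ⟨by omega, h16⟩

private lemma sq8 (x : ℤ) :
    (x % 4 = 0 ∧ x^2 % 8 = 0) ∨ ((x % 4 = 1 ∨ x % 4 = 3) ∧ x^2 % 8 = 1)
      ∨ (x % 4 = 2 ∧ x^2 % 8 = 4) := by
  have h8 := sq_mod8 x
  have h4 : x % 4 = 0 ∨ x % 4 = 1 ∨ x % 4 = 2 ∨ x % 4 = 3 := by omega
  rcases h4 with h4|h4|h4|h4 <;> rw [h4] at h8 <;> norm_num at h8
  · exact Or.inl ⟨h4, Int.emod_eq_zero_of_dvd h8⟩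
  · exact Or.inr (Or.inl ⟨Or.inl h4, h8⟩)
  · exact Or.inr (Or.inr ⟨h4, h8⟩)
  · exact Or.inr (Or.inl ⟨Or.inr h4, h8⟩)

private lemma sq4 (x : ℤ) : (x % 2 = 0 ∧ x^2 % 4 = 0) ∨ (x % 2 = 1 ∧ x^2 % 4 = 1) := by
  have h4 := sq_mod4 x
  have h2 : x % 2 = 0 ∨ x % 2 = 1 := by omega
  rcases h2 with h2|h2 <;> rw [h2] at h4 <;> norm_num at h4
  · exact Or.inl ⟨h2, Int.emod_eq_zero_of_dvd h4⟩
  · exact Or.inr ⟨h2, h4⟩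

private lemma parity3 (x y z k : ℤ) (hE : x^2+3*y^2+3*z^2 = 4*k) :
    (x % 2 = 0 ∧ y % 2 = 0 ∧ z % 2 = 0) ∨ (x % 2 = 1 ∧ y % 2 = 1 ∧ z % 2 = 0)
      ∨ (x % 2 = 1 ∧ y % 2 = 0 ∧ z % 2 = 1) := by
  have hx := sq4 x; have hy := sq4 y; have hz := sq4 z
  obtain ⟨X, hX⟩ : ∃ X, x^2 = X := ⟨_, rfl⟩
  obtain ⟨Y, hY⟩ : ∃ Y, y^2 = Y := ⟨_, rfl⟩
  obtain ⟨Z, hZ⟩ : ∃ Z, z^2 = Z := ⟨_, rfl⟩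
  rw [hX] at hx hE; rw [hY] at hy hE; rw [hZ] at hz hE
  omega

private lemma keyA (x y z n : ℤ) (hx : x % 2 = 1) (hy : y % 2 = 1) (hz : z % 2 = 0)
    (hE : x^2+3*y^2+3*z^2 = 4*(8*n+7)) :
    z % 4 = 0 ∧ ((x-y) % 4 = 0 → (y-x) % 8 = 4 ∧ (x+3*y) % 8 = 0)
      ∧ ((x-y) % 4 = 2 → (x+y) % 8 = 4 ∧ (3*y-x) % 8 = 0) := by
  have h1 := odd_sq16 x hx; have h2 := odd_sq16 y hy; have h3 := even_sq16 z hz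
  obtain ⟨X, hX⟩ : ∃ X, x^2 = X := ⟨_, rfl⟩
  obtain ⟨Y, hY⟩ : ∃ Y, y^2 = Y := ⟨_, rfl⟩
  obtain ⟨Z, hZ⟩ : ∃ Z, z^2 = Z := ⟨_, rfl⟩
  rw [hX] at h1 hE; rw [hY] at h2 hE; rw [hZ] at h3 hE
  omega

private lemma keyOdd (u v w n : ℤ) (hv : v % 2 = 1)
    (huw : (u-w) % 4 = 0 ∨ (u+w) % 4 = 0)
    (hE : u^2+3*v^2+3*w^2 = 8*n+7) : u % 2 = 1 ∧ w % 2 = 1 := by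
  have h1 := sq8 u; have h2 := sq8 v; have h3 := sq8 w
  obtain ⟨X, hX⟩ : ∃ X, u^2 = X := ⟨_, rfl⟩
  obtain ⟨Y, hY⟩ : ∃ Y, v^2 = Y := ⟨_, rfl⟩
  obtain ⟨Z, hZ⟩ : ∃ Z, w^2 = Z := ⟨_, rfl⟩
  rw [hX] at h1 hE; rw [hY] at h2 hE; rw [hZ] at h3 hE
  omega

private lemma phi1_mem (u v w m x y : ℤ) (hQ : u^2+3*v^2+3*w^2 = m)
    (hu : u % 2 = 1) (hv : v % 2 = 1) (hw : w % 2 = 1) (hc : (u+w) % 4 = 2)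
    (hx : 2*x = -u-6*v-3*w) (hy : 2*y = -u+2*v-3*w) :
    x^2+3*y^2+3*(-u+w)^2 = 4*m ∧ x % 2 = 1 ∧ y % 2 = 1 ∧ (-u+w) % 2 = 0 := by
  refine ⟨?_, by omega, by omega, by omega⟩
  have h4 : (4:ℤ) * (x^2+3*y^2+3*(-u+w)^2) = 4 * (4*m) := by
    linear_combination (2*x + (-u-6*v-3*w)) * hx + 3*(2*y + (-u+2*v-3*w)) * hy + 16 * hQ
  exact mul_left_cancel₀ (by norm_num) h4

private lemma phi2_mem (u v w m x y : ℤ) (hQ : u^2+3*v^2+3*w^2 = m)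
    (hu : u % 2 = 1) (hv : v % 2 = 1) (hw : w % 2 = 1) (hc : (u+w) % 4 = 0)
    (hx : 2*x = -u-6*v+3*w) (hy : 2*y = u-2*v-3*w) :
    x^2+3*y^2+3*(-u-w)^2 = 4*m ∧ x % 2 = 1 ∧ y % 2 = 1 ∧ (-u-w) % 2 = 0 := by
  refine ⟨?_, by omega, by omega, by omega⟩
  have h4 : (4:ℤ) * (x^2+3*y^2+3*(-u-w)^2) = 4 * (4*m) := by
    linear_combination (2*x + (-u-6*v+3*w)) * hx + 3*(2*y + (u-2*v-3*w)) * hy + 16 * hQ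
  exact mul_left_cancel₀ (by norm_num) h4

private lemma psi1_mem (x y z n u v w : ℤ) (hQ : x^2+3*y^2+3*z^2 = 4*(8*n+7))
    (hx : x % 2 = 1) (hy : y % 2 = 1) (hz : z % 2 = 0) (hc : (x-y) % 4 = 0)
    (hu : 8*u = -x-3*y-6*z) (hv : 4*v = y-x) (hw : 8*w = -x-3*y+2*z) :
    u^2+3*v^2+3*w^2 = 8*n+7 ∧ u % 2 = 1 ∧ v % 2 = 1 ∧ w % 2 = 1 := by
  obtain ⟨hz4, hkey, -⟩ := keyA x y z n hx hy hz hQ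
  obtain ⟨h48, h80⟩ := hkey hc
  have hQ' : u^2+3*v^2+3*w^2 = 8*n+7 := by
    have h64 : (64:ℤ) * (u^2+3*v^2+3*w^2) = 64 * (8*n+7) := by
      linear_combination (8*u + (-x-3*y-6*z)) * hu + 12*(4*v + (y-x)) * hv
        + 3*(8*w + (-x-3*y+2*z)) * hw + 16 * hQ
    exact mul_left_cancel₀ (by norm_num) h64
  have hvodd : v % 2 = 1 := by omega
  have huw : (u-w) % 4 = 0 := by omega
  obtain ⟨h1, h2⟩ := keyOdd u v w n hvodd (Or.inl huw) hQ'
  exact ⟨hQ', h1, hvodd, h2⟩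

private lemma psi2_mem (x y z n u v w : ℤ) (hQ : x^2+3*y^2+3*z^2 = 4*(8*n+7))
    (hx : x % 2 = 1) (hy : y % 2 = 1) (hz : z % 2 = 0) (hc : (x-y) % 4 = 2)
    (hu : 8*u = -x+3*y-6*z) (hv : 4*v = -x-y) (hw : 8*w = x-3*y-2*z) :
    u^2+3*v^2+3*w^2 = 8*n+7 ∧ u % 2 = 1 ∧ v % 2 = 1 ∧ w % 2 = 1 := by
  obtain ⟨hz4, -, hkey⟩ := keyA x y z n hx hy hz hQ
  obtain ⟨h48, h80⟩ := hkey hc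
  have hQ' : u^2+3*v^2+3*w^2 = 8*n+7 := by
    have h64 : (64:ℤ) * (u^2+3*v^2+3*w^2) = 64 * (8*n+7) := by
      linear_combination (8*u + (-x+3*y-6*z)) * hu + 12*(4*v + (-x-y)) * hv
        + 3*(8*w + (x-3*y-2*z)) * hw + 16 * hQ
    exact mul_left_cancel₀ (by norm_num) h64
  have hvodd : v % 2 = 1 := by omega
  have huw : (u+w) % 4 = 0 := by omega
  obtain ⟨h1, h2⟩ := keyOdd u v w n hvodd (Or.inr huw) hQ'
  exact ⟨hQ', h1, hvodd, h2⟩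

private def QSet (k : ℤ) : Set (ℤ × ℤ × ℤ) :=
  {p | p.1^2 + 3*p.2.1^2 + 3*p.2.2^2 = k}

private def TSet (n : ℕ) : Set (ℕ × ℕ × ℕ) :=
  {p | p.1*(p.1+1) + 3*(p.2.1*(p.2.1+1)) + 3*(p.2.2*(p.2.2+1)) = 2*n}

private lemma QSet_finite (k : ℤ) : (QSet k).Finite := by
  apply Set.Finite.subset
    (((Set.finite_Icc (-k) k).prod ((Set.finite_Icc (-k) k).prod (Set.finite_Icc (-k) k))))
  rintro ⟨x, y, z⟩ hp
  simp only [QSet, Set.mem_setOf_eq] at hp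
  have hx2 : x^2 ≤ k := by nlinarith [sq_nonneg y, sq_nonneg z]
  have hy2 : y^2 ≤ k := by nlinarith [sq_nonneg x, sq_nonneg z, sq_nonneg y]
  have hz2 : z^2 ≤ k := by nlinarith [sq_nonneg x, sq_nonneg y, sq_nonneg z]
  simp only [Set.mem_prod, Set.mem_Icc]
  refine ⟨⟨?_, ?_⟩, ⟨?_, ?_⟩, ?_, ?_⟩ <;> nlinarith [sq_nonneg (x-1), sq_nonneg (x+1),
    sq_nonneg (y-1), sq_nonneg (y+1), sq_nonneg (z-1), sq_nonneg (z+1)]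

private lemma TSet_finite (n : ℕ) : (TSet n).Finite := by
  apply Set.Finite.subset
    ((Set.finite_Iic (2*n)).prod ((Set.finite_Iic (2*n)).prod (Set.finite_Iic (2*n))))
  rintro ⟨x, y, z⟩ hp
  simp only [TSet, Set.mem_setOf_eq] at hp
  simp only [Set.mem_prod, Set.mem_Iic]
  refine ⟨?_, ?_, ?_⟩ <;> nlinarith

private def SE (n : ℕ) : Set (ℤ × ℤ × ℤ) :=
  {p | p.1^2 + 3*p.2.1^2 + 3*p.2.2^2 = 4*(8*(n:ℤ)+7) ∧ p.1 % 2 = 0 ∧ p.2.1 % 2 = 0 ∧ p.2.2 % 2 = 0}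
private def SA (n : ℕ) : Set (ℤ × ℤ × ℤ) :=
  {p | p.1^2 + 3*p.2.1^2 + 3*p.2.2^2 = 4*(8*(n:ℤ)+7) ∧ p.1 % 2 = 1 ∧ p.2.1 % 2 = 1 ∧ p.2.2 % 2 = 0}
private def SB (n : ℕ) : Set (ℤ × ℤ × ℤ) :=
  {p | p.1^2 + 3*p.2.1^2 + 3*p.2.2^2 = 4*(8*(n:ℤ)+7) ∧ p.1 % 2 = 1 ∧ p.2.1 % 2 = 0 ∧ p.2.2 % 2 = 1}
private def OddS (n : ℕ) : Set (ℤ × ℤ × ℤ) :=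
  {p | p.1^2 + 3*p.2.1^2 + 3*p.2.2^2 = 8*(n:ℤ)+7 ∧ p.1 % 2 = 1 ∧ p.2.1 % 2 = 1 ∧ p.2.2 % 2 = 1}

private lemma SE_fin (n : ℕ) : (SE n).Finite :=
  (QSet_finite _).subset (fun p hp => hp.1)
private lemma SA_fin (n : ℕ) : (SA n).Finite :=
  (QSet_finite _).subset (fun p hp => hp.1)
private lemma SB_fin (n : ℕ) : (SB n).Finite :=
  (QSet_finite _).subset (fun p hp => hp.1)
private lemma OddS_fin (n : ℕ) : (OddS n).Finite :=
  (QSet_finite _).subset (fun p hp => hp.1)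

private lemma step_partition (n : ℕ) :
    (QSet (4*(8*(n:ℤ)+7))).ncard = (SE n).ncard + (SA n).ncard + (SB n).ncard := by
  have hU : QSet (4*(8*(n:ℤ)+7)) = SE n ∪ (SA n ∪ SB n) := by
    ext ⟨x, y, z⟩
    simp only [QSet, SE, SA, SB, Set.mem_setOf_eq, Set.mem_union]
    constructor
    · intro h
      have hp3 := parity3 x y z (8*(n:ℤ)+7) h
      rcases hp3 with h1 | h1 | h1
      · exact Or.inl ⟨h, h1⟩
      · exact Or.inr (Or.inl ⟨h, h1⟩)
      · exact Or.inr (Or.inr ⟨h, h1⟩)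
    · rintro (h | h | h) <;> exact h.1
  rw [hU, Set.ncard_union_eq ?d1 (SE_fin n) ((SA_fin n).union (SB_fin n)),
    Set.ncard_union_eq ?d2 (SA_fin n) (SB_fin n), add_assoc]
  case d1 =>
    rw [Set.disjoint_left]
    rintro ⟨x, y, z⟩ h1 h2
    simp only [SE, SA, SB, Set.mem_setOf_eq, Set.mem_union] at h1 h2
    rcases h2 with h2 | h2 <;> omega
  case d2 =>
    rw [Set.disjoint_left]
    rintro ⟨x, y, z⟩ h1 h2
    simp only [SA, SB, Set.mem_setOf_eq] at h1 h2
    omega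

private lemma step_E (n : ℕ) : (SE n).ncard = (QSet (8*(n:ℤ)+7)).ncard := by
  have himg : SE n = (fun p : ℤ × ℤ × ℤ => (2*p.1, 2*p.2.1, 2*p.2.2)) '' QSet (8*(n:ℤ)+7) := by
    ext ⟨x, y, z⟩
    simp only [SE, QSet, Set.mem_setOf_eq, Set.mem_image, Prod.mk.injEq, Prod.exists]
    constructor
    · rintro ⟨hE, hx, hy, hz⟩
      refine ⟨x/2, y/2, z/2, ?_, by omega, by omega, by omega⟩
      have ha : 2*(x/2) = x := by omega
      have hb : 2*(y/2) = y := by omega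
      have hc : 2*(z/2) = z := by omega
      have h4 : (4:ℤ) * ((x/2)^2 + 3*(y/2)^2 + 3*(z/2)^2) = 4*(8*(n:ℤ)+7) := by
        linear_combination (2*(x/2)+x)*ha + 3*(2*(y/2)+y)*hb + 3*(2*(z/2)+z)*hc + hE
      exact mul_left_cancel₀ (by norm_num) h4
    · rintro ⟨a, b, c, hE, rfl, rfl, rfl⟩
      refine ⟨by linear_combination 4*hE, by omega, by omega, by omega⟩
  rw [himg, Set.ncard_image_of_injOn]
  rintro ⟨x, y, z⟩ - ⟨x', y', z'⟩ - h
  simp only [Prod.mk.injEq] at h ⊢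
  omega

private lemma step_B (n : ℕ) : (SB n).ncard = (SA n).ncard := by
  have himg : SB n = (fun p : ℤ × ℤ × ℤ => (p.1, p.2.2, p.2.1)) '' SA n := by
    ext ⟨x, y, z⟩
    simp only [SB, SA, Set.mem_setOf_eq, Set.mem_image, Prod.mk.injEq, Prod.exists]
    constructor
    · rintro ⟨hE, hx, hy, hz⟩
      exact ⟨x, z, y, ⟨by linear_combination hE, hx, hz, hy⟩, rfl, rfl, rfl⟩
    · rintro ⟨a, b, c, ⟨hE, ha, hb, hc⟩, rfl, rfl, rfl⟩
      exact ⟨by linear_combination hE, ha, hc, hb⟩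
  rw [himg, Set.ncard_image_of_injOn]
  rintro ⟨x, y, z⟩ - ⟨x', y', z'⟩ - h
  simp only [Prod.mk.injEq] at h ⊢
  tauto

private noncomputable def phiF : ℤ × ℤ × ℤ → ℤ × ℤ × ℤ := fun p =>
  if (p.1 + p.2.2) % 4 = 2 then
    ((-p.1-6*p.2.1-3*p.2.2)/2, (-p.1+2*p.2.1-3*p.2.2)/2, -p.1+p.2.2)
  else
    ((-p.1-6*p.2.1+3*p.2.2)/2, (p.1-2*p.2.1-3*p.2.2)/2, -p.1-p.2.2)

private noncomputable def psiF : ℤ × ℤ × ℤ → ℤ × ℤ × ℤ := fun p =>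
  if (p.1 - p.2.1) % 4 = 0 then
    ((-p.1-3*p.2.1-6*p.2.2)/8, (p.2.1-p.1)/4, (-p.1-3*p.2.1+2*p.2.2)/8)
  else
    ((-p.1+3*p.2.1-6*p.2.2)/8, (-p.1-p.2.1)/4, (p.1-3*p.2.1-2*p.2.2)/8)

private lemma phiF_mapsto (n : ℕ) : Set.MapsTo phiF (OddS n) (SA n) := by
  rintro ⟨u, v, w⟩ ⟨hQ, hu, hv, hw⟩
  dsimp only at hQ hu hv hw
  simp only [phiF, OddS, SA, Set.mem_setOf_eq]
  by_cases hc : (u + w) % 4 = 2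
  · rw [if_pos hc]
    have hx : 2*((-u-6*v-3*w)/2) = -u-6*v-3*w := Int.mul_ediv_cancel' (by omega)
    have hy : 2*((-u+2*v-3*w)/2) = -u+2*v-3*w := Int.mul_ediv_cancel' (by omega)
    exact phi1_mem u v w _ _ _ hQ hu hv hw hc hx hy
  · rw [if_neg hc]
    have hc0 : (u + w) % 4 = 0 := by omega
    have hx : 2*((-u-6*v+3*w)/2) = -u-6*v+3*w := Int.mul_ediv_cancel' (by omega)
    have hy : 2*((u-2*v-3*w)/2) = u-2*v-3*w := Int.mul_ediv_cancel' (by omega)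
    exact phi2_mem u v w _ _ _ hQ hu hv hw hc0 hx hy

private lemma phiF_inj (n : ℕ) : Set.InjOn phiF (OddS n) := by
  rintro ⟨u, v, w⟩ ⟨hQ, hu, hv, hw⟩ ⟨u', v', w'⟩ ⟨hQ', hu', hv', hw'⟩ heq
  dsimp only at hQ hu hv hw hQ' hu' hv' hw'
  simp only [phiF] at heq
  by_cases hc : (u + w) % 4 = 2 <;> by_cases hc' : (u' + w') % 4 = 2
  · rw [if_pos hc, if_pos hc'] at heq
    have hx : 2*((-u-6*v-3*w)/2) = -u-6*v-3*w := Int.mul_ediv_cancel' (by omega)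
    have hy : 2*((-u+2*v-3*w)/2) = -u+2*v-3*w := Int.mul_ediv_cancel' (by omega)
    have hx' : 2*((-u'-6*v'-3*w')/2) = -u'-6*v'-3*w' := Int.mul_ediv_cancel' (by omega)
    have hy' : 2*((-u'+2*v'-3*w')/2) = -u'+2*v'-3*w' := Int.mul_ediv_cancel' (by omega)
    simp only [Prod.mk.injEq] at heq
    refine Prod.ext ?_ (Prod.ext ?_ ?_) <;> dsimp only <;> omega
  · exfalso
    rw [if_pos hc, if_neg hc'] at heq
    have hc0 : (u' + w') % 4 = 0 := by omega
    have hx : 2*((-u-6*v-3*w)/2) = -u-6*v-3*w := Int.mul_ediv_cancel' (by omega)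
    have hy : 2*((-u+2*v-3*w)/2) = -u+2*v-3*w := Int.mul_ediv_cancel' (by omega)
    have hx' : 2*((-u'-6*v'+3*w')/2) = -u'-6*v'+3*w' := Int.mul_ediv_cancel' (by omega)
    have hy' : 2*((u'-2*v'-3*w')/2) = u'-2*v'-3*w' := Int.mul_ediv_cancel' (by omega)
    obtain ⟨-, hxo, hyo, -⟩ := phi1_mem u v w _ _ _ hQ hu hv hw hc hx hy
    obtain ⟨-, hxo', hyo', -⟩ := phi2_mem u' v' w' _ _ _ hQ' hu' hv' hw' hc0 hx' hy'
    simp only [Prod.mk.injEq] at heq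
    omega
  · exfalso
    rw [if_neg hc, if_pos hc'] at heq
    have hc0 : (u + w) % 4 = 0 := by omega
    have hx : 2*((-u-6*v+3*w)/2) = -u-6*v+3*w := Int.mul_ediv_cancel' (by omega)
    have hy : 2*((u-2*v-3*w)/2) = u-2*v-3*w := Int.mul_ediv_cancel' (by omega)
    have hx' : 2*((-u'-6*v'-3*w')/2) = -u'-6*v'-3*w' := Int.mul_ediv_cancel' (by omega)
    have hy' : 2*((-u'+2*v'-3*w')/2) = -u'+2*v'-3*w' := Int.mul_ediv_cancel' (by omega)
    obtain ⟨-, hxo, hyo, -⟩ := phi2_mem u v w _ _ _ hQ hu hv hw hc0 hx hy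
    obtain ⟨-, hxo', hyo', -⟩ := phi1_mem u' v' w' _ _ _ hQ' hu' hv' hw' hc' hx' hy'
    simp only [Prod.mk.injEq] at heq
    omega
  · rw [if_neg hc, if_neg hc'] at heq
    have hc0 : (u + w) % 4 = 0 := by omega
    have hc0' : (u' + w') % 4 = 0 := by omega
    have hx : 2*((-u-6*v+3*w)/2) = -u-6*v+3*w := Int.mul_ediv_cancel' (by omega)
    have hy : 2*((u-2*v-3*w)/2) = u-2*v-3*w := Int.mul_ediv_cancel' (by omega)
    have hx' : 2*((-u'-6*v'+3*w')/2) = -u'-6*v'+3*w' := Int.mul_ediv_cancel' (by omega)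
    have hy' : 2*((u'-2*v'-3*w')/2) = u'-2*v'-3*w' := Int.mul_ediv_cancel' (by omega)
    simp only [Prod.mk.injEq] at heq
    refine Prod.ext ?_ (Prod.ext ?_ ?_) <;> dsimp only <;> omega

private lemma psiF_mapsto (n : ℕ) : Set.MapsTo psiF (SA n) (OddS n) := by
  rintro ⟨x, y, z⟩ ⟨hQ, hx, hy, hz⟩
  dsimp only at hQ hx hy hz
  simp only [psiF, OddS, SA, Set.mem_setOf_eq]
  obtain ⟨hz4, hk1, hk2⟩ := keyA x y z n hx hy hz hQ
  by_cases hc : (x - y) % 4 = 0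
  · rw [if_pos hc]
    obtain ⟨h48, h80⟩ := hk1 hc
    have hu : 8*((-x-3*y-6*z)/8) = -x-3*y-6*z := Int.mul_ediv_cancel' (by omega)
    have hv : 4*((y-x)/4) = y-x := Int.mul_ediv_cancel' (by omega)
    have hw : 8*((-x-3*y+2*z)/8) = -x-3*y+2*z := Int.mul_ediv_cancel' (by omega)
    exact psi1_mem x y z n _ _ _ hQ hx hy hz hc hu hv hw
  · rw [if_neg hc]
    have hc2 : (x - y) % 4 = 2 := by omega
    obtain ⟨h48, h80⟩ := hk2 hc2
    have hu : 8*((-x+3*y-6*z)/8) = -x+3*y-6*z := Int.mul_ediv_cancel' (by omega)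
    have hv : 4*((-x-y)/4) = -x-y := Int.mul_ediv_cancel' (by omega)
    have hw : 8*((x-3*y-2*z)/8) = x-3*y-2*z := Int.mul_ediv_cancel' (by omega)
    exact psi2_mem x y z n _ _ _ hQ hx hy hz hc2 hu hv hw

private lemma psiF_inj (n : ℕ) : Set.InjOn psiF (SA n) := by
  rintro ⟨x, y, z⟩ ⟨hQ, hx, hy, hz⟩ ⟨x', y', z'⟩ ⟨hQ', hx', hy', hz'⟩ heq
  dsimp only at hQ hx hy hz hQ' hx' hy' hz'
  simp only [psiF] at heq
  obtain ⟨hz4, hk1, hk2⟩ := keyA x y z n hx hy hz hQ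
  obtain ⟨hz4', hk1', hk2'⟩ := keyA x' y' z' n hx' hy' hz' hQ'
  by_cases hc : (x - y) % 4 = 0 <;> by_cases hc' : (x' - y') % 4 = 0
  · rw [if_pos hc, if_pos hc'] at heq
    obtain ⟨h48, h80⟩ := hk1 hc
    obtain ⟨h48', h80'⟩ := hk1' hc'
    have hu : 8*((-x-3*y-6*z)/8) = -x-3*y-6*z := Int.mul_ediv_cancel' (by omega)
    have hv : 4*((y-x)/4) = y-x := Int.mul_ediv_cancel' (by omega)
    have hw : 8*((-x-3*y+2*z)/8) = -x-3*y+2*z := Int.mul_ediv_cancel' (by omega)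
    have hu' : 8*((-x'-3*y'-6*z')/8) = -x'-3*y'-6*z' := Int.mul_ediv_cancel' (by omega)
    have hv' : 4*((y'-x')/4) = y'-x' := Int.mul_ediv_cancel' (by omega)
    have hw' : 8*((-x'-3*y'+2*z')/8) = -x'-3*y'+2*z' := Int.mul_ediv_cancel' (by omega)
    simp only [Prod.mk.injEq] at heq
    refine Prod.ext ?_ (Prod.ext ?_ ?_) <;> dsimp only <;> omega
  · exfalso
    rw [if_pos hc, if_neg hc'] at heq
    have hc2' : (x' - y') % 4 = 2 := by omega
    obtain ⟨h48, h80⟩ := hk1 hc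
    obtain ⟨h48', h80'⟩ := hk2' hc2'
    have hu : 8*((-x-3*y-6*z)/8) = -x-3*y-6*z := Int.mul_ediv_cancel' (by omega)
    have hv : 4*((y-x)/4) = y-x := Int.mul_ediv_cancel' (by omega)
    have hw : 8*((-x-3*y+2*z)/8) = -x-3*y+2*z := Int.mul_ediv_cancel' (by omega)
    have hu' : 8*((-x'+3*y'-6*z')/8) = -x'+3*y'-6*z' := Int.mul_ediv_cancel' (by omega)
    have hv' : 4*((-x'-y')/4) = -x'-y' := Int.mul_ediv_cancel' (by omega)
    have hw' : 8*((x'-3*y'-2*z')/8) = x'-3*y'-2*z' := Int.mul_ediv_cancel' (by omega)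
    obtain ⟨-, huo, hvo, hwo⟩ := psi1_mem x y z n _ _ _ hQ hx hy hz hc hu hv hw
    simp only [Prod.mk.injEq] at heq
    omega
  · exfalso
    rw [if_neg hc, if_pos hc'] at heq
    have hc2 : (x - y) % 4 = 2 := by omega
    obtain ⟨h48, h80⟩ := hk2 hc2
    obtain ⟨h48', h80'⟩ := hk1' hc'
    have hu : 8*((-x+3*y-6*z)/8) = -x+3*y-6*z := Int.mul_ediv_cancel' (by omega)
    have hv : 4*((-x-y)/4) = -x-y := Int.mul_ediv_cancel' (by omega)
    have hw : 8*((x-3*y-2*z)/8) = x-3*y-2*z := Int.mul_ediv_cancel' (by omega)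
    have hu' : 8*((-x'-3*y'-6*z')/8) = -x'-3*y'-6*z' := Int.mul_ediv_cancel' (by omega)
    have hv' : 4*((y'-x')/4) = y'-x' := Int.mul_ediv_cancel' (by omega)
    have hw' : 8*((-x'-3*y'+2*z')/8) = -x'-3*y'+2*z' := Int.mul_ediv_cancel' (by omega)
    obtain ⟨-, huo, hvo, hwo⟩ := psi2_mem x y z n _ _ _ hQ hx hy hz hc2 hu hv hw
    simp only [Prod.mk.injEq] at heq
    omega
  · rw [if_neg hc, if_neg hc'] at heq
    have hc2 : (x - y) % 4 = 2 := by omega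
    have hc2' : (x' - y') % 4 = 2 := by omega
    obtain ⟨h48, h80⟩ := hk2 hc2
    obtain ⟨h48', h80'⟩ := hk2' hc2'
    have hu : 8*((-x+3*y-6*z)/8) = -x+3*y-6*z := Int.mul_ediv_cancel' (by omega)
    have hv : 4*((-x-y)/4) = -x-y := Int.mul_ediv_cancel' (by omega)
    have hw : 8*((x-3*y-2*z)/8) = x-3*y-2*z := Int.mul_ediv_cancel' (by omega)
    have hu' : 8*((-x'+3*y'-6*z')/8) = -x'+3*y'-6*z' := Int.mul_ediv_cancel' (by omega)
    have hv' : 4*((-x'-y')/4) = -x'-y' := Int.mul_ediv_cancel' (by omega)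
    have hw' : 8*((x'-3*y'-2*z')/8) = x'-3*y'-2*z' := Int.mul_ediv_cancel' (by omega)
    simp only [Prod.mk.injEq] at heq
    refine Prod.ext ?_ (Prod.ext ?_ ?_) <;> dsimp only <;> omega

private lemma step_A (n : ℕ) : (SA n).ncard = (OddS n).ncard := by
  refine le_antisymm ?_ ?_
  · exact Set.ncard_le_ncard_of_injOn psiF (psiF_mapsto n) (psiF_inj n) (OddS_fin n)
  · exact Set.ncard_le_ncard_of_injOn phiF (phiF_mapsto n) (phiF_inj n) (SA_fin n)

private def sg (b : Bool) (a : ℕ) : ℤ := cond b (-(2*(a:ℤ)+1)) (2*(a:ℤ)+1)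

private lemma sg_sq (b : Bool) (a : ℕ) : (sg b a)^2 = (2*(a:ℤ)+1)^2 := by
  cases b <;> simp [sg] <;> ring

private lemma sg_odd (b : Bool) (a : ℕ) : (sg b a) % 2 = 1 := by
  cases b <;> simp [sg] <;> omega

private lemma sg_inj {b b' : Bool} {a a' : ℕ} (h : sg b a = sg b' a') : b = b' ∧ a = a' := by
  cases b <;> cases b' <;> simp [sg] at h ⊢ <;> omega

private lemma odd_repr (x : ℤ) (h : x % 2 = 1) : ∃ (b : Bool) (a : ℕ), x = sg b a := by
  rcases lt_or_ge x 0 with h0 | h0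
  · exact ⟨true, x.natAbs / 2, by simp only [sg, cond]; omega⟩
  · exact ⟨false, x.natAbs / 2, by simp only [sg, cond]; omega⟩

private noncomputable def oddBij (n : ℕ) :
    (Bool × Bool × Bool) × ↥(TSet n) → ↥(OddS n) := fun q =>
  ⟨(sg q.1.1 q.2.1.1, sg q.1.2.1 q.2.1.2.1, sg q.1.2.2 q.2.1.2.2), by
    obtain ⟨⟨b1, b2, b3⟩, ⟨⟨a, b, c⟩, ht⟩⟩ := q
    simp only [TSet, Set.mem_setOf_eq] at ht
    have htz : (a:ℤ)*(a+1) + 3*(b*(b+1)) + 3*(c*(c+1)) = 2*n := by exact_mod_cast ht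
    refine ⟨?_, sg_odd _ _, sg_odd _ _, sg_odd _ _⟩
    dsimp only
    rw [sg_sq, sg_sq, sg_sq]
    linear_combination 4*htz⟩

private lemma oddBij_bij (n : ℕ) : Function.Bijective (oddBij n) := by
  constructor
  · rintro ⟨⟨b1, b2, b3⟩, ⟨⟨a, b, c⟩, ht⟩⟩ ⟨⟨b1', b2', b3'⟩, ⟨⟨a', b', c'⟩, ht'⟩⟩ h
    simp only [oddBij, Subtype.mk.injEq, Prod.mk.injEq] at h
    obtain ⟨e1, e2, e3⟩ := h
    obtain ⟨f1, f2⟩ := sg_inj e1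
    obtain ⟨f3, f4⟩ := sg_inj e2
    obtain ⟨f5, f6⟩ := sg_inj e3
    simp only [Prod.mk.injEq, Subtype.mk.injEq]
    exact ⟨⟨f1, f3, f5⟩, f2, f4, f6⟩
  · rintro ⟨⟨x, y, z⟩, hQ, hx, hy, hz⟩
    dsimp only at hQ hx hy hz
    obtain ⟨b1, a, rfl⟩ := odd_repr x hx
    obtain ⟨b2, b, rfl⟩ := odd_repr y hy
    obtain ⟨b3, c, rfl⟩ := odd_repr z hz
    rw [sg_sq, sg_sq, sg_sq] at hQ
    have hQ' : ((2*a+1)^2 + 3*(2*b+1)^2 + 3*(2*c+1)^2 : ℕ) = 8*n+7 := by exact_mod_cast hQ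
    have hmem : (a, b, c) ∈ TSet n := by
      simp only [TSet, Set.mem_setOf_eq]
      have i1 : (2*a+1)^2 = 4*(a*(a+1))+1 := by ring
      have i2 : (2*b+1)^2 = 4*(b*(b+1))+1 := by ring
      have i3 : (2*c+1)^2 = 4*(c*(c+1))+1 := by ring
      obtain ⟨A, hA⟩ : ∃ A, a*(a+1) = A := ⟨_, rfl⟩
      obtain ⟨B, hB⟩ : ∃ B, b*(b+1) = B := ⟨_, rfl⟩
      obtain ⟨C, hC⟩ : ∃ C, c*(c+1) = C := ⟨_, rfl⟩
      rw [i1, i2, i3, hA, hB, hC] at hQ'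
      rw [hA, hB, hC]
      omega
    exact ⟨⟨(b1, b2, b3), ⟨(a, b, c), hmem⟩⟩, Subtype.ext rfl⟩

private lemma step_odd (n : ℕ) : (OddS n).ncard = 8 * (TSet n).ncard := by
  rw [← Nat.card_coe_set_eq, ← Nat.card_coe_set_eq,
    ← Nat.card_eq_of_bijective _ (oddBij_bij n), Nat.card_prod, Nat.card_prod, Nat.card_prod]
  simp [Nat.card_eq_fintype_card]

private lemma N_eq (k : ℕ) : N 1 3 3 k = (QSet (k:ℤ)).ncard := by
  rw [N, ← Nat.card_coe_set_eq]
  refine Nat.card_congr (Equiv.subtypeEquivRight fun p => ?_)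
  simp only [QSet, Set.mem_setOf_eq]
  push_cast
  constructor <;> intro h <;> linarith

private lemma T_eq (n : ℕ) : T 1 3 3 n = (TSet n).ncard := by
  rw [T, ← Nat.card_coe_set_eq]
  refine Nat.card_congr (Equiv.subtypeEquivRight fun p => ?_)
  simp only [TSet, Set.mem_setOf_eq]
  have e1 : p.1*(p.1+1) % 2 = 0 := by
    rcases Nat.even_mul_succ_self p.1 with ⟨t, ht⟩; omega
  have e2 : p.2.1*(p.2.1+1) % 2 = 0 := by
    rcases Nat.even_mul_succ_self p.2.1 with ⟨t, ht⟩; omega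
  have e3 : p.2.2*(p.2.2+1) % 2 = 0 := by
    rcases Nat.even_mul_succ_self p.2.2 with ⟨t, ht⟩; omega
  obtain ⟨A, hA⟩ : ∃ A, p.1*(p.1+1) = A := ⟨_, rfl⟩
  obtain ⟨B, hB⟩ : ∃ B, p.2.1*(p.2.1+1) = B := ⟨_, rfl⟩
  obtain ⟨C, hC⟩ : ∃ C, p.2.2*(p.2.2+1) = C := ⟨_, rfl⟩
  rw [hA] at e1; rw [hB] at e2; rw [hC] at e3
  rw [hA, hB, hC]
  omega

theorem stmt_4 (n : ℕ) (hn : 0 < n) :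
    (16 * T 1 3 3 n : ℤ) = (N 1 3 3 (4 * (8 * n + 7)) : ℤ) - (N 1 3 3 (8 * n + 7) : ℤ) := by
  have hc4 : ((4 * (8 * n + 7) : ℕ) : ℤ) = 4*(8*(n:ℤ)+7) := by push_cast; ring
  have hcm : ((8 * n + 7 : ℕ) : ℤ) = 8*(n:ℤ)+7 := by push_cast; ring
  have h1 : N 1 3 3 (4 * (8 * n + 7)) = (QSet (4*(8*(n:ℤ)+7))).ncard := by rw [N_eq, hc4]
  have h2 : N 1 3 3 (8 * n + 7) = (QSet (8*(n:ℤ)+7)).ncard := by rw [N_eq, hcm]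
  have hmain : N 1 3 3 (4 * (8 * n + 7)) = N 1 3 3 (8 * n + 7) + 16 * T 1 3 3 n := by
    rw [h1, h2, T_eq, step_partition, step_E, step_B, step_A, step_odd]
    ring
  omega
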